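/- Let M₁, …, M_q ∈ ℝᵖ and m₁, …, m_q ≥ 0 with m_{i*} ≥ m̲ > 0 for some index i*. For each i, let Ω_i = { W ∈ ℝᵖ : W = Σ_{j≠i} m_j M_j for some m_j ≥ 0 } be the conical hull of the other vectors, and assume −M_i ∉ Ω_i for all i. Then there exists ε > 0, depending only on the M_i, such that ‖Σ_{i=1}^q m_i M_i‖² ≥ ε·m̲² > 0. -/

import Mathlib

/-!
If `∑ mᵢ Mᵢ = 0` with `m ≥ 0` and some `mᵢ > 0`, dividing by `mᵢ` puts `-Mᵢ` in the cone of the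
other vectors; so `m ↦ ‖∑ mᵢ Mᵢ‖` has no zero on the nonnegative part of the unit sphere of the
sup norm. By compactness it is bounded below there by some `ε > 0`, and by homogeneity
`‖∑ mᵢ Mᵢ‖ ≥ ε ‖m‖∞ ≥ ε m_{i*} ≥ ε m̲` for all `m ≥ 0`.
-/

open Finset

theorem sum_smul_ne_zero_of_neg_notMem_cone {𝕜 ι E : Type*} [Field 𝕜] [LinearOrder 𝕜]
    [IsStrictOrderedRing 𝕜] [Fintype ι] [DecidableEq ι] [AddCommGroup E] [Module 𝕜 E]
    {v : ι → E} (hv : ∀ i (c : ι → 𝕜), (∀ j, 0 ≤ c j) → -v i ≠ ∑ j ∈ univ \ {i}, c j • v j)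
    {m : ι → 𝕜} (hm : 0 ≤ m) (hm₀ : m ≠ 0) : ∑ i, m i • v i ≠ 0 := by
  obtain ⟨i, hi⟩ := Function.ne_iff.mp hm₀
  have hpos : 0 < m i := (hm i).lt_of_ne' hi
  intro hsum
  rw [sum_eq_sum_sdiff_singleton_add (mem_univ i)] at hsum
  refine hv i (fun j => m j / m i) (fun j => div_nonneg (hm j) hpos.le) ?_
  have hscaled := congrArg ((m i)⁻¹ • ·) hsum
  simp only [smul_add, smul_sum, smul_smul, smul_zero, inv_mul_cancel₀ hi, one_smul] at hscaled
  simp only [div_eq_inv_mul]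
  exact neg_eq_of_add_eq_zero_left hscaled

theorem exists_pos_mul_norm_le_norm_apply {E F : Type*} [NormedAddCommGroup E] [NormedSpace ℝ E]
    [FiniteDimensional ℝ E] [NormedAddCommGroup F] [NormedSpace ℝ F] (L : E →L[ℝ] F) {C : Set E}
    (hC : IsClosed C) (hsmul : ∀ x ∈ C, ∀ t : ℝ, 0 < t → t • x ∈ C)
    (hL : ∀ x ∈ C, x ≠ 0 → L x ≠ 0) : ∃ ε > 0, ∀ x ∈ C, ε * ‖x‖ ≤ ‖L x‖ := by
  have := FiniteDimensional.proper_real E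
  have hK : IsCompact (Metric.sphere (0 : E) 1 ∩ C) := (isCompact_sphere 0 1).inter_right hC
  obtain ⟨ε, hε, hmin⟩ := hK.exists_forall_le' (a := 0) (by fun_prop) fun x ⟨hx1, hxC⟩ =>
    norm_pos_iff.mpr (hL x hxC (ne_zero_of_mem_unit_sphere ⟨x, hx1⟩))
  refine ⟨ε, hε, fun x hxC => ?_⟩
  rcases eq_or_ne x 0 with rfl | hx
  · simp
  have hnx : 0 < ‖x‖ := norm_pos_iff.mpr hx
  have hunit : ‖x‖⁻¹ • x ∈ Metric.sphere (0 : E) 1 ∩ C :=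
    ⟨by simp [norm_smul, hnx.ne'], hsmul x hxC _ (inv_pos.mpr hnx)⟩
  have hεx := hmin _ hunit
  rw [map_smul, norm_smul, norm_inv, norm_norm, inv_mul_eq_div, le_div_iff₀ hnx] at hεx
  linarith

theorem stmt_1 (p q : ℕ) (M : Fin q → EuclideanSpace ℝ (Fin p))
    (hcone : ∀ i : Fin q,
      -M i ∉ {W : EuclideanSpace ℝ (Fin p) |
        ∃ m : Fin q → ℝ, (∀ j, 0 ≤ m j) ∧ W = ∑ j ∈ Finset.univ \ {i}, m j • M j}) :
    ∃ ε > 0, ∀ (m : Fin q → ℝ) (mbar : ℝ) (istar : Fin q),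
      (∀ i, 0 ≤ m i) → 0 < mbar → mbar ≤ m istar →
      ‖∑ i, m i • M i‖ ^ 2 ≥ ε * mbar ^ 2 ∧ 0 < ε * mbar ^ 2 := by
  let L := LinearMap.toContinuousLinearMap (Fintype.linearCombination ℝ M)
  have hL : ∀ m ∈ Set.Ici (0 : Fin q → ℝ), m ≠ 0 → L m ≠ 0 := fun m hm hm₀ => by
    simpa [L, Fintype.linearCombination_apply] using
      sum_smul_ne_zero_of_neg_notMem_cone (fun i c hc h => hcone i ⟨c, hc, h⟩) hm hm₀
  obtain ⟨ε, hε, hbound⟩ := exists_pos_mul_norm_le_norm_apply L isClosed_Ici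
    (fun m hm t ht => Set.mem_Ici.mpr (smul_nonneg ht.le hm)) hL
  refine ⟨ε ^ 2, by positivity, fun m mbar istar hm hmbar hle => ⟨?_, by positivity⟩⟩
  have hmbar_le : mbar ≤ ‖m‖ := hle.trans ((le_abs_self _).trans (norm_le_pi_norm m istar))
  have hnorm := hbound m hm
  simp only [L, LinearMap.coe_toContinuousLinearMap', Fintype.linearCombination_apply] at hnorm
  calc ε ^ 2 * mbar ^ 2 = (ε * mbar) ^ 2 := by ring
    _ ≤ ‖∑ i, m i • M i‖ ^ 2 := pow_le_pow_left₀ (by positivity)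
      ((mul_le_mul_of_nonneg_left hmbar_le hε.le).trans hnorm) 2
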